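/- arXiv:1412.4445 — 3 statements merged into one kernel-verified Lean document; each statement's English description precedes it below -/
import Mathlib

section
/- Let h : (0,1)×(0,∞) → ℝ, h(t,s) = t·s, and let ρ be the measure on (0,1)×(0,∞) which is the product of Lebesgue measure on (0,1) and the measure e^{-y} dy on (0,∞). Then the pushforward of ρ under h has density Γ(0,w) = ∫_w^∞ e^{-s}/s ds with respect to Lebesgue measure on (0,∞). -/
/-!
For fixed `x ∈ (0,1)` the scaled exponential law `x • Exp(1)` has density `e^{-w/x}/x` on
`(0,∞)`. Averaging these densities over `x` (Tonelli) and substituting `s = w/x`, which maps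
`(0,1)` onto `(w,∞)` with `dx/x = ds/s`, gives the density `∫_w^∞ e^{-s}/s ds`.
-/

open MeasureTheory Real Set ENNReal

theorem lintegral_Ioi_zero_eq_ofReal_mul_lintegral_comp_mul_left {c : ℝ} (hc : 0 < c)
    (g : ℝ → ℝ≥0∞) :
    ∫⁻ w in Ioi 0, g w = ENNReal.ofReal c * ∫⁻ y in Ioi 0, g (c * y) := by
  nth_rw 1 [← image_const_mul_Ioi_zero hc]
  rw [lintegral_image_eq_lintegral_abs_deriv_mul measurableSet_Ioi
      (fun y _ => by simpa using ((hasDerivAt_id y).const_mul c).hasDerivWithinAt)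
      (mul_right_injective₀ hc.ne').injOn,
    abs_of_pos hc, lintegral_const_mul' _ _ ofReal_ne_top]

theorem image_const_div_Ioo_zero_one {K : Type*} [Field K] [LinearOrder K]
    [IsStrictOrderedRing K] {w : K} (hw : 0 < w) : (w / ·) '' Ioo 0 1 = Ioi w := by
  ext u
  simp only [mem_image, mem_Ioo, mem_Ioi]
  constructor
  · rintro ⟨x, ⟨hx0, hx1⟩, rfl⟩
    exact (lt_div_iff₀ hx0).2 (by nlinarith)
  · intro hu
    have hu0 : 0 < u := hw.trans hu
    exact ⟨w / u, ⟨by positivity, (div_lt_one hu0).2 hu⟩, by field_simp⟩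

theorem lintegral_Ioi_eq_lintegral_Ioo_zero_one_comp_const_div {w : ℝ} (hw : 0 < w)
    (g : ℝ → ℝ≥0∞) :
    ∫⁻ s in Ioi w, g s = ∫⁻ x in Ioo 0 1, ENNReal.ofReal (w / x ^ 2) * g (w / x) := by
  have hderiv : ∀ x ∈ Ioo (0 : ℝ) 1, HasDerivWithinAt (w / ·) (-(w / x ^ 2)) (Ioo 0 1) x :=
    fun x hx => by
      simpa [div_eq_mul_inv] using
        ((hasDerivAt_inv hx.1.ne').const_mul w).hasDerivWithinAt (s := Ioo (0 : ℝ) 1)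
  have hinj : InjOn (w / ·) (Ioo (0 : ℝ) 1) := fun a ha b hb h =>
    inv_injective (mul_left_cancel₀ hw.ne' (by simpa [div_eq_mul_inv] using h))
  rw [← image_const_div_Ioo_zero_one hw,
    lintegral_image_eq_lintegral_abs_deriv_mul measurableSet_Ioo hderiv hinj]
  simp only [abs_neg]
  refine setLIntegral_congr_fun measurableSet_Ioo fun x hx => ?_
  rw [abs_of_pos (by have := hx.1; positivity)]

theorem integrableOn_exp_neg_div_self_Ioi {w : ℝ} (hw : 0 < w) :
    IntegrableOn (fun s => exp (-s) / s) (Ioi w) := by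
  refine Integrable.mono' ((exp_neg_integrableOn_Ioi w one_pos).const_mul w⁻¹)
    (by fun_prop : Measurable fun s : ℝ => exp (-s) / s).aestronglyMeasurable ?_
  filter_upwards [ae_restrict_mem measurableSet_Ioi] with s hs
  have hs0 : 0 < s := hw.trans hs
  rw [norm_of_nonneg (by positivity), neg_one_mul, ← div_eq_inv_mul]
  exact div_le_div_of_nonneg_left (exp_pos _).le hw hs.le

theorem lintegral_Ioo_zero_one_ofReal_inv_mul_exp_neg_div {w : ℝ} (hw : 0 < w) :
    ∫⁻ x in Ioo 0 1, ENNReal.ofReal x⁻¹ * ENNReal.ofReal (exp (-(w / x))) =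
      ENNReal.ofReal (∫ s in Ioi w, exp (-s) / s) := by
  rw [ofReal_integral_eq_lintegral_ofReal (integrableOn_exp_neg_div_self_Ioi hw)
      (by filter_upwards [ae_restrict_mem measurableSet_Ioi] with s hs
          have := hw.trans hs; positivity),
    lintegral_Ioi_eq_lintegral_Ioo_zero_one_comp_const_div hw]
  refine setLIntegral_congr_fun measurableSet_Ioo fun x hx => ?_
  have hx0 : 0 < x := hx.1
  rw [← ofReal_mul (by positivity), ← ofReal_mul (by positivity)]
  congr 1
  field_simp

theorem map_const_mul_withDensity_restrict_Ioi_zero {c : ℝ} (hc : 0 < c) (f : ℝ → ℝ≥0∞) :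
    Measure.map (c * ·) ((volume.restrict (Ioi 0)).withDensity f) =
      (volume.restrict (Ioi 0)).withDensity fun w => ENNReal.ofReal c⁻¹ * f (w / c) := by
  ext s hs
  rw [Measure.map_apply (measurable_const_mul c) hs, withDensity_apply _ hs,
    withDensity_apply _ (measurable_const_mul c hs), ← lintegral_indicator hs,
    ← lintegral_indicator (measurable_const_mul c hs),
    lintegral_Ioi_zero_eq_ofReal_mul_lintegral_comp_mul_left hc (s.indicator _),
    ← lintegral_const_mul' _ _ ofReal_ne_top]
  refine setLIntegral_congr_fun measurableSet_Ioi fun y _ => ?_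
  by_cases hy : c * y ∈ s
  · rw [indicator_of_mem hy, indicator_of_mem (show y ∈ (c * ·) ⁻¹' s from hy), ← mul_assoc,
      ← ofReal_mul hc.le, mul_inv_cancel₀ hc.ne', ofReal_one, one_mul, mul_div_cancel_left₀ y hc.ne']
  · rw [indicator_of_notMem hy, indicator_of_notMem (show y ∉ (c * ·) ⁻¹' s from hy), mul_zero]

/-- The pushforward of `1_{(0,1)}(x)dx × e^{-y}1_{(0,∞)}(y)dy` under `(x,y) ↦ x·y`
has density `Γ(0,w) = ∫_w^∞ e^{-s}/s ds` with respect to Lebesgue measure on `(0,∞)`. -/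
theorem map_mul_prod_exp_eq_withDensity_incompleteGamma :
    Measure.map (fun p : ℝ × ℝ => p.1 * p.2)
        ((volume.restrict (Ioo (0 : ℝ) 1)).prod
          ((volume.restrict (Ioi (0 : ℝ))).withDensity
            (fun y => ENNReal.ofReal (Real.exp (-y))))) =
      (volume.restrict (Ioi (0 : ℝ))).withDensity
        (fun w => ENNReal.ofReal (∫ s in Ioi w, Real.exp (-s) / s)) := by
  ext s hs
  have hmul : Measurable fun p : ℝ × ℝ => p.1 * p.2 := by fun_prop
  rw [Measure.map_apply hmul hs, Measure.prod_apply (hmul hs), withDensity_apply _ hs]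
  calc _ = ∫⁻ x in Ioo 0 1, ∫⁻ w in s, ENNReal.ofReal x⁻¹ * ENNReal.ofReal (exp (-(w / x)))
          ∂(volume.restrict (Ioi 0)) := by
        refine setLIntegral_congr_fun measurableSet_Ioo fun x hx => ?_
        rw [← withDensity_apply _ hs,
          ← map_const_mul_withDensity_restrict_Ioi_zero hx.1 fun y => ENNReal.ofReal (exp (-y)),
          Measure.map_apply (measurable_const_mul x) hs]
        rfl
    _ = ∫⁻ w in s, (∫⁻ x in Ioo 0 1, ENNReal.ofReal x⁻¹ * ENNReal.ofReal (exp (-(w / x))))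
          ∂(volume.restrict (Ioi 0)) :=
        lintegral_lintegral_swap (Measurable.aemeasurable (by fun_prop))
    _ = _ := by
        rw [Measure.restrict_restrict hs]
        exact setLIntegral_congr_fun (hs.inter measurableSet_Ioi) fun w hw =>
          lintegral_Ioo_zero_one_ofReal_inv_mul_exp_neg_div hw.2
end

section
/- Let h : (0,∞)×(0,∞) → ℝ, h(t,s) = t·e^{-s}, and let ρ be the product of the measure e^{-t}dt on (0,∞) with Lebesgue measure ds on (0,∞). Then the pushforward of ρ under h has density e^{-u}/u with respect to Lebesgue measure on (0,∞). -/
/-! For fixed `t > 0`, the substitution `u = t * exp (-s)` carries `ds` on `(0, ∞)` to `du / u` on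
`(0, t)`. Exchanging the order of integration over the triangle `0 < u < t` then leaves the density
`u⁻¹ * ∫_u^∞ exp (-t) dt = exp (-u) / u`. -/

open MeasureTheory Real Set

theorem image_mul_exp_neg_Ioi {t : ℝ} (ht : 0 < t) :
    (fun s => t * exp (-s)) '' Ioi 0 = Ioo 0 t := by
  ext u
  constructor
  · rintro ⟨s, hs, rfl⟩
    exact ⟨by positivity, mul_lt_of_lt_one_right ht (exp_lt_one_iff.2 (neg_neg_iff_pos.2 hs))⟩
  · rintro ⟨hu, hut⟩
    refine ⟨log (t / u), log_pos ((one_lt_div hu).2 hut), ?_⟩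
    simp only [exp_neg, exp_log (div_pos ht hu)]
    field_simp

theorem lintegral_Ioi_comp_mul_exp_neg {t : ℝ} (ht : 0 < t) (g : ℝ → ENNReal) :
    ∫⁻ s in Ioi 0, g (t * exp (-s)) = ∫⁻ u in Ioo 0 t, ENNReal.ofReal u⁻¹ * g u := by
  have hderiv : ∀ s ∈ Ioi (0 : ℝ),
      HasDerivWithinAt (fun s => t * exp (-s)) (-(t * exp (-s))) (Ioi 0) s := fun s _ => by
    simpa using ((hasDerivAt_neg' s).exp.const_mul t).hasDerivWithinAt
  have hinj : InjOn (fun s => t * exp (-s)) (Ioi 0) := fun s _ s' _ h => by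
    simpa [ht.ne'] using h
  rw [← image_mul_exp_neg_Ioi ht,
    lintegral_image_eq_lintegral_abs_deriv_mul measurableSet_Ioi hderiv hinj]
  refine lintegral_congr fun s => ?_
  have hpos : 0 < t * exp (-s) := by positivity
  rw [abs_neg, abs_of_pos hpos, ← mul_assoc, ← ENNReal.ofReal_mul hpos.le,
    mul_inv_cancel₀ hpos.ne', ENNReal.ofReal_one, one_mul]

theorem lintegral_Ioi_Ioo_swap {μ ν : Measure ℝ} [SFinite μ] [SFinite ν] (a : ℝ)
    {f : ℝ → ℝ → ENNReal} (hf : Measurable (Function.uncurry f)) :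
    ∫⁻ t in Ioi a, ∫⁻ u in Ioo a t, f t u ∂ν ∂μ =
      ∫⁻ u in Ioi a, ∫⁻ t in Ioi u, f t u ∂μ ∂ν := by
  have hIoo (t : ℝ) :
      ∫⁻ u in Ioo a t, f t u ∂ν = ∫⁻ u in Ioi a, (Iio t).indicator (f t) u ∂ν := by
    rw [setLIntegral_indicator measurableSet_Iio, inter_comm, Ioi_inter_Iio]
  have hIoi : EqOn (fun u => ∫⁻ t in Ioi u, f t u ∂μ)
      (fun u => ∫⁻ t in Ioi a, (Ioi u).indicator (f · u) t ∂μ) (Ioi a) := fun u hu => by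
    dsimp only
    rw [setLIntegral_indicator measurableSet_Ioi, Ioi_inter_Ioi, sup_eq_left.2 (le_of_lt hu)]
  rw [lintegral_congr hIoo, setLIntegral_congr_fun measurableSet_Ioi hIoi]
  simp only [indicator_apply, mem_Iio, mem_Ioi]
  exact lintegral_lintegral_swap
    (hf.ite (measurableSet_lt measurable_snd measurable_fst) measurable_const).aemeasurable

theorem lintegral_Ioi_ofReal_exp_neg (a : ℝ) :
    ∫⁻ t in Ioi a, ENNReal.ofReal (exp (-t)) = ENNReal.ofReal (exp (-a)) := by
  have hint : IntegrableOn (fun t => exp (-t)) (Ioi a) := by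
    simpa using exp_neg_integrableOn_Ioi a one_pos
  rw [← ofReal_integral_eq_lintegral_ofReal hint
    (Filter.Eventually.of_forall fun t => (exp_pos _).le), integral_exp_neg_Ioi]

/-- The pushforward of `e^{-t}1_{(0,∞)}(t)dt × 1_{(0,∞)}(s)ds` under `(t,s) ↦ t·e^{-s}`
has density `u ↦ e^{-u}/u` with respect to Lebesgue measure on `(0,∞)`. -/
theorem map_mul_exp_neg_prod_eq_withDensity :
    Measure.map (fun p : ℝ × ℝ => p.1 * Real.exp (-p.2))
        (((volume.restrict (Ioi (0 : ℝ))).withDensity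
            (fun t => ENNReal.ofReal (Real.exp (-t)))).prod
          (volume.restrict (Ioi (0 : ℝ)))) =
      (volume.restrict (Ioi (0 : ℝ))).withDensity
        (fun u => ENNReal.ofReal (Real.exp (-u) / u)) := by
  have hh : Measurable fun p : ℝ × ℝ => p.1 * exp (-p.2) := by fun_prop
  have hexp : Measurable fun t => ENNReal.ofReal (exp (-t)) := by fun_prop
  refine Measure.ext_of_lintegral _ fun g hg => ?_
  have hinner : Measurable fun t => ∫⁻ s in Ioi 0, g (t * exp (-s)) :=
    (hg.comp hh).lintegral_prod_right'
  have hinv : Measurable fun u => ENNReal.ofReal u⁻¹ * g u := by fun_prop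
  calc ∫⁻ u, g u ∂_
      = ∫⁻ t in Ioi 0, ENNReal.ofReal (exp (-t)) * ∫⁻ s in Ioi 0, g (t * exp (-s)) := by
        rw [lintegral_map hg hh, lintegral_prod (fun p => g (p.1 * exp (-p.2))) (by fun_prop),
          lintegral_withDensity_eq_lintegral_mul _ hexp hinner]
        rfl
    _ = ∫⁻ t in Ioi 0, ∫⁻ u in Ioo 0 t,
          ENNReal.ofReal (exp (-t)) * (ENNReal.ofReal u⁻¹ * g u) := by
        refine setLIntegral_congr_fun measurableSet_Ioi fun t ht => ?_
        rw [lintegral_Ioi_comp_mul_exp_neg ht, lintegral_const_mul _ hinv]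
    _ = ∫⁻ u in Ioi 0, ∫⁻ t in Ioi u,
          ENNReal.ofReal (exp (-t)) * (ENNReal.ofReal u⁻¹ * g u) :=
        lintegral_Ioi_Ioo_swap 0 (by fun_prop)
    _ = ∫⁻ u in Ioi 0, ENNReal.ofReal (exp (-u) / u) * g u := by
        refine lintegral_congr fun u => ?_
        rw [lintegral_mul_const _ hexp, lintegral_Ioi_ofReal_exp_neg, ← mul_assoc,
          ← ENNReal.ofReal_mul (exp_pos _).le, div_eq_mul_inv]
    _ = _ := (lintegral_withDensity_eq_lintegral_mul _ (by fun_prop) hg).symm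
end

section
/- For every t ∈ ℝ, ∫_0^∞ (e^{itw} − 1)·(e^{-w}/w) dw = −log(1 − it), where log is the principal branch of the complex logarithm. Equivalently, exp of the left side equals 1/(1−it), which is the characteristic function of the standard exponential distribution. -/
/-!
Both sides vanish at `t = 0`, so it suffices to compare derivatives in `t`. Differentiating
under the integral sign (dominated by `e^{-w}`) cancels the singular factor `1/w` and leaves
`∫_0^∞ i e^{(it - 1)w} dw = i/(1 - it)`, which is also the derivative of `-log(1 - it)`; the
latter is differentiable because `1 - it` stays in the right half-plane, away from the branch cut.
-/

open MeasureTheory Real Set Filter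

theorem eq_of_hasDerivAt_eq {E : Type*} [NormedAddCommGroup E] [NormedSpace ℝ E]
    {f g f' : ℝ → E} (hf : ∀ x, HasDerivAt f (f' x) x) (hg : ∀ x, HasDerivAt g (f' x) x)
    (a : ℝ) (ha : f a = g a) : f = g :=
  eq_of_fderiv_eq (fun x => (hf x).differentiableAt) (fun x => (hg x).differentiableAt)
    (fun x => by rw [(hf x).hasFDerivAt.fderiv, (hg x).hasFDerivAt.fderiv]) a ha

/-- The Lévy exponent of the standard exponential law, whose Lévy measure is
`e^{-w}/w dw` on `(0, ∞)`. -/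
noncomputable def exponentialLevyExponent (t : ℝ) : ℂ :=
  ∫ w in Ioi (0 : ℝ), (Complex.exp (Complex.I * t * w) - 1) * (Real.exp (-w) / w)

theorem norm_cexp_I_mul_sub_one_mul_exp_neg_div_le (t : ℝ) {w : ℝ} (hw : 0 < w) :
    ‖(Complex.exp (Complex.I * t * w) - 1) * (Real.exp (-w) / w)‖ ≤ |t| * Real.exp (-w) := by
  have hexp : ‖Complex.exp (Complex.I * t * w) - 1‖ ≤ |t| * w := by
    simpa [mul_assoc, abs_of_pos hw] using
      Real.norm_exp_I_mul_ofReal_sub_one_le (x := t * w)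
  have hdens : ‖(Real.exp (-w) / w : ℂ)‖ = Real.exp (-w) / w := by
    rw [← Complex.ofReal_div, Complex.norm_real, Real.norm_of_nonneg (by positivity)]
  calc ‖(Complex.exp (Complex.I * t * w) - 1) * (Real.exp (-w) / w)‖
      ≤ |t| * w * (Real.exp (-w) / w) := by
        rw [norm_mul, hdens]; gcongr
    _ = |t| * Real.exp (-w) := by field_simp

theorem integrableOn_cexp_I_mul_sub_one_mul_exp_neg_div (t : ℝ) :
    IntegrableOn (fun w : ℝ => (Complex.exp (Complex.I * t * w) - 1) * (Real.exp (-w) / w))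
      (Ioi 0) :=
  ((integrableOn_exp_neg_Ioi 0).const_mul |t|).mono' (by fun_prop)
    (ae_restrict_of_forall_mem measurableSet_Ioi fun _ hw =>
      norm_cexp_I_mul_sub_one_mul_exp_neg_div_le t hw)

theorem hasDerivAt_cexp_I_mul_sub_one_mul_exp_neg_div {w : ℝ} (hw : w ≠ 0) (t : ℝ) :
    HasDerivAt (fun s : ℝ => (Complex.exp (Complex.I * s * w) - 1) * (Real.exp (-w) / w))
      (Complex.I * Complex.exp ((Complex.I * t - 1) * w)) t := by
  have hlin : HasDerivAt (fun s : ℝ => Complex.I * s * w) (Complex.I * w) t := by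
    simpa [mul_comm, mul_left_comm, mul_assoc] using
      (Complex.ofRealCLM.hasDerivAt (x := t)).const_mul (Complex.I * (w : ℂ))
  refine ((hlin.cexp.sub_const 1).mul_const ((Real.exp (-w) : ℂ) / w)).congr_deriv ?_
  have hw' : (w : ℂ) ≠ 0 := Complex.ofReal_ne_zero.mpr hw
  rw [Complex.ofReal_exp, Complex.ofReal_neg, sub_mul, one_mul, Complex.exp_sub, Complex.exp_neg]
  field_simp

theorem hasDerivAt_exponentialLevyExponent (t : ℝ) :
    HasDerivAt exponentialLevyExponent (Complex.I / (1 - Complex.I * t)) t := by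
  have hbound : ∀ s w : ℝ, ‖Complex.I * Complex.exp ((Complex.I * s - 1) * w)‖ = Real.exp (-w) :=
    fun s w => by simp [Complex.norm_exp]
  obtain ⟨-, hderiv⟩ := hasDerivAt_integral_of_dominated_loc_of_deriv_le
    (μ := volume.restrict (Ioi 0)) (bound := fun w => Real.exp (-w)) univ_mem
    (Eventually.of_forall fun s =>
      (integrableOn_cexp_I_mul_sub_one_mul_exp_neg_div s).aestronglyMeasurable)
    (integrableOn_cexp_I_mul_sub_one_mul_exp_neg_div t) (by fun_prop)
    (ae_of_all _ fun w s _ => (hbound s w).le) (integrableOn_exp_neg_Ioi 0)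
    (ae_restrict_of_forall_mem measurableSet_Ioi fun w hw s _ =>
      hasDerivAt_cexp_I_mul_sub_one_mul_exp_neg_div (ne_of_gt hw) s)
  have hre : (Complex.I * t - 1).re < 0 := by simp
  have hint : ∫ w in Ioi (0 : ℝ), Complex.I * Complex.exp ((Complex.I * t - 1) * w) =
      Complex.I / (1 - Complex.I * t) := by
    rw [integral_const_mul, integral_exp_mul_complex_Ioi hre 0]
    have hne : Complex.I * t - 1 ≠ 0 := fun h => by simp [h] at hre
    have hne' : 1 - Complex.I * t ≠ 0 := fun h => hne (by linear_combination -h)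
    simp only [Complex.ofReal_zero, mul_zero, Complex.exp_zero]
    field_simp
    ring
  exact hint ▸ hderiv

theorem hasDerivAt_neg_log_one_sub_I_mul (t : ℝ) :
    HasDerivAt (fun s : ℝ => -Complex.log (1 - Complex.I * s))
      (Complex.I / (1 - Complex.I * t)) t := by
  have hlin : HasDerivAt (fun s : ℝ => 1 - Complex.I * s) (-Complex.I) t := by
    simpa using ((Complex.ofRealCLM.hasDerivAt (x := t)).const_mul Complex.I).const_sub 1
  have hslit : 1 - Complex.I * t ∈ Complex.slitPlane :=
    Complex.mem_slitPlane_iff.2 (Or.inl (by simp))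
  have hlog := (hlin.clog_real hslit).neg
  rwa [neg_div, neg_neg] at hlog

/-- For every real `t`, `∫_0^∞ (e^{itw} - 1) e^{-w}/w dw = -log(1 - it)`,
with the principal branch of the complex logarithm. -/
theorem integral_exponential_log_cf (t : ℝ) :
    (∫ w in Ioi (0 : ℝ),
        (Complex.exp (Complex.I * t * w) - 1) * (Real.exp (-w) / w)) =
      -Complex.log (1 - Complex.I * t) :=
  congrFun (eq_of_hasDerivAt_eq hasDerivAt_exponentialLevyExponent
    hasDerivAt_neg_log_one_sub_I_mul 0 (by simp [exponentialLevyExponent])) t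
end
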